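/- Fourth-order operator bound for the normalization defect of the jump Kraus operators: let Q be a positive semidefinite Hermitian d×d complex matrix and Δt ≥ 0; set S = I + (Δt²/4)Q² and let S^{−1/2} be the inverse of its positive definite square root. Then, in the Loewner order, 0 ≤ Δt·(I − S^{−1/2})·Q·(I − S^{−1/2}) ≤ (Δt⁴/16)·Q⁴. -/

import Mathlib

open Matrix
open scoped ComplexOrder

/-- The positive semidefinite square root of a matrix (defined to be `0` if the matrix is not
positive semidefinite). -/
noncomputable def matSqrt {d : ℕ} (A : Matrix (Fin d) (Fin d) ℂ) : Matrix (Fin d) (Fin d) ℂ :=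
  open scoped Classical in
  if h : A.PosSemidef then
    (h.1.eigenvectorUnitary : Matrix (Fin d) (Fin d) ℂ) *
      diagonal ((↑) ∘ (√·) ∘ h.1.eigenvalues) * (star (h.1.eigenvectorUnitary : Matrix (Fin d) (Fin d) ℂ))
  else 0

/-! Every operator in sight is a continuous function of `Q`, so by the continuous functional
calculus both inequalities reduce to scalar ones on the spectrum of `Q`, which lies in `[0, ∞)`.
For `y = Δt q / 2` and `t = √(1 + y²)` one has `1 - t⁻¹ = y² / (t (t + 1))` and `2 y ≤ 1 + y² = t²`,
whence `Δt q (1 - t⁻¹)² = 2 y (1 - t⁻¹)² ≤ y⁴ = Δt⁴ q⁴ / 16`. -/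

open scoped MatrixOrder Ring

lemma matSqrt_eq_cfc {d : ℕ} {A : Matrix (Fin d) (Fin d) ℂ} (hA : A.PosSemidef) :
    matSqrt A = cfc Real.sqrt A := by
  rw [matSqrt, dif_pos hA, hA.1.cfc_eq, IsHermitian.cfc, Unitary.conjStarAlgAut_apply]
  rfl

lemma two_mul_mul_one_sub_inv_sqrt_one_add_sq_sq_le (y : ℝ) :
    2 * y * (1 - (√(1 + y ^ 2))⁻¹) ^ 2 ≤ y ^ 4 := by
  set t := √(1 + y ^ 2)
  have ht1 : 1 ≤ t := Real.one_le_sqrt.mpr (le_add_of_nonneg_right (by positivity))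
  have ht2 : t ^ 2 = 1 + y ^ 2 := Real.sq_sqrt (by positivity)
  have hdefect : 1 - t⁻¹ = y ^ 2 / (t * (t + 1)) := by
    field_simp
    nlinarith
  have hden : 2 * y ≤ t ^ 2 * (t + 1) ^ 2 := by nlinarith [sq_nonneg (y - 1)]
  calc 2 * y * (1 - t⁻¹) ^ 2 = y ^ 4 * (2 * y / (t ^ 2 * (t + 1) ^ 2)) := by
        rw [hdefect]; field_simp
    _ ≤ y ^ 4 * 1 := by gcongr; exact div_le_one_of_le₀ hden (by positivity)
    _ = y ^ 4 := mul_one _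

section ContinuousFunctionalCalculus

variable {A : Type*} [Ring A] [StarRing A] [TopologicalSpace A] [Algebra ℝ A]
  [ContinuousFunctionalCalculus ℝ A IsSelfAdjoint]

lemma ringInverse_cfc_sqrt_one_add_smul_sq_eq_cfc [T2Space A] {a : A} (ha : IsSelfAdjoint a)
    {r : ℝ} (hr : 0 ≤ r) :
    (cfc Real.sqrt (1 + r • a ^ 2))⁻¹ʳ = cfc (fun x ↦ (√(1 + r * x ^ 2))⁻¹) a := by
  have hS : 1 + r • a ^ 2 = cfc (fun x ↦ 1 + r * x ^ 2) a := by
    rw [cfc_add .., cfc_const_one ℝ a, cfc_const_mul .., cfc_pow_id ..]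
  rw [hS, ← cfc_comp' Real.sqrt _ a, cfc_inv _ a]
  intro x _
  exact (Real.sqrt_pos.mpr (by positivity)).ne'

lemma smul_one_sub_cfc_mul_mul_one_sub_cfc_eq_cfc {a : A} (ha : IsSelfAdjoint a) (t : ℝ)
    {g : ℝ → ℝ} (hg : Continuous g) :
    t • ((1 - cfc g a) * a * (1 - cfc g a)) = cfc (fun x ↦ t * ((1 - g x) * x * (1 - g x))) a := by
  rw [cfc_const_mul .., cfc_mul .., cfc_mul .., cfc_sub .., cfc_const_one ℝ a, cfc_id' ℝ a]

variable [PartialOrder A] [StarOrderedRing A] [NonnegSpectrumClass ℝ A]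

theorem kraus_defect_nonneg_and_le_smul_pow_four [T2Space A] {a : A} (ha : 0 ≤ a) {t : ℝ}
    (ht : 0 ≤ t) {u : A} (hu : u = (cfc Real.sqrt (1 + (t ^ 2 / 4) • a ^ 2))⁻¹ʳ) :
    0 ≤ t • ((1 - u) * a * (1 - u)) ∧ t • ((1 - u) * a * (1 - u)) ≤ (t ^ 4 / 16) • a ^ 4 := by
  have hsa : IsSelfAdjoint a := .of_nonneg ha
  have hg : Continuous fun x : ℝ ↦ (√(1 + t ^ 2 / 4 * x ^ 2))⁻¹ :=
    Continuous.inv₀ (by fun_prop) fun x ↦ (Real.sqrt_pos.mpr (by positivity)).ne'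
  rw [hu, ringInverse_cfc_sqrt_one_add_smul_sq_eq_cfc hsa (by positivity),
    smul_one_sub_cfc_mul_mul_one_sub_cfc_eq_cfc hsa t hg, ← cfc_pow_id (R := ℝ) a 4,
    ← cfc_const_mul ..]
  constructor
  · refine cfc_nonneg fun x hx ↦ ?_
    rw [mul_right_comm]
    exact mul_nonneg ht (mul_nonneg (mul_self_nonneg _) (spectrum_nonneg_of_nonneg ha hx))
  · refine cfc_mono fun x _ ↦ ?_
    rw [show t ^ 2 / 4 * x ^ 2 = (t * x / 2) ^ 2 by ring]
    calc _ = 2 * (t * x / 2) * (1 - (√(1 + (t * x / 2) ^ 2))⁻¹) ^ 2 := by ring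
      _ ≤ (t * x / 2) ^ 4 := two_mul_mul_one_sub_inv_sqrt_one_add_sq_sq_le _
      _ = t ^ 4 / 16 * x ^ 4 := by ring

end ContinuousFunctionalCalculus

/-- Fourth-order operator bound for the normalization defect of the jump Kraus operators: for
`Q` positive semidefinite and `S = I + (Δt²/4)Q²`, in the Loewner order
`0 ≤ Δt (I − S^{−1/2}) Q (I − S^{−1/2}) ≤ (Δt⁴/16) Q⁴`. -/
theorem stmt15 {d : ℕ} (Q : Matrix (Fin d) (Fin d) ℂ) (hQ : Q.PosSemidef)
    (Δt : ℝ) (hΔt : 0 ≤ Δt)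
    (B : Matrix (Fin d) (Fin d) ℂ)
    (hB : B = (Δt : ℂ) • ((1 - (matSqrt (1 + ((Δt ^ 2 / 4 : ℝ) : ℂ) • Q ^ 2))⁻¹) * Q *
        (1 - (matSqrt (1 + ((Δt ^ 2 / 4 : ℝ) : ℂ) • Q ^ 2))⁻¹))) :
    B.PosSemidef ∧ (((Δt ^ 4 / 16 : ℝ) : ℂ) • Q ^ 4 - B).PosSemidef := by
  simp only [Complex.coe_smul] at hB ⊢
  have hS : (1 + (Δt ^ 2 / 4) • Q ^ 2).PosSemidef :=
    PosSemidef.one.add ((hQ.pow 2).smul (by positivity))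
  rw [matSqrt_eq_cfc hS, nonsing_inv_eq_ringInverse] at hB
  obtain ⟨hB0, hBle⟩ := kraus_defect_nonneg_and_le_smul_pow_four hQ.nonneg hΔt rfl
  exact ⟨(hB ▸ hB0).posSemidef, hB ▸ hBle⟩
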